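/- (Relation between the unnormalized risk-sensitive conditional state and the normalized conditional state.) Let Γ be a controlled transfer operator with p(y|u,ω) ≠ 0 for every u ∈ U, y ∈ Y and every normalized state ω. Let L be a cost function, μ > 0, and R(u)ω̂ = (tr(exp(μ L(u)) ω̂)/tr ω̂) · ω̂ (with R(u)0 = 0). Fix any controls u_0, u_1, … and outcomes y_1, y_2, …, let ω_0 be a normalized state, ω_{k+1} = Λ_Γ(u_k,y_{k+1}) ω_k, and let ω̂_0 = ω_0, ω̂_{k+1} = Λ_{Γ,R}(u_k,y_{k+1}) ω̂_k. Then for every k ≥ 0, ω̂_k = (∏_{i=0}^{k−1} tr(exp(μ L(u_i)) ω_i)) · ω_k. -/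

import Mathlib

open Matrix BigOperators
open scoped ComplexOrder

noncomputable section

/-- Complex `n × n` matrices. -/
abbrev Mat (n : ℕ) := Matrix (Fin n) (Fin n) ℂ

/-- Real part of the trace. -/
def trR {n : ℕ} (A : Mat n) : ℝ := A.trace.re

/-- The matrix exponential. -/
def expM {n : ℕ} (A : Mat n) : Mat n := NormedSpace.exp A

/-- The probability `p(y|u,ω) = tr(Γ(u,y)ω)`. -/
def pDist {n : ℕ} {U Y : Type*} (Γ : U → Y → Mat n →ₗ[ℂ] Mat n)
    (u : U) (y : Y) (ω : Mat n) : ℝ := trR (Γ u y ω)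

/-- The normalized conditional state `Λ_Γ(u,y)ω = Γ(u,y)ω / p(y|u,ω)` (equal to `0`
when `p(y|u,ω) = 0`). -/
def lamState {n : ℕ} {U Y : Type*} (Γ : U → Y → Mat n →ₗ[ℂ] Mat n)
    (u : U) (y : Y) (ω : Mat n) : Mat n := (pDist Γ u y ω)⁻¹ • Γ u y ω

/-- The exponential operator valued cost
`R(u)ωh = (tr(exp(μ L(u)) ωh)/tr ωh) • ωh` (with `R(u)0 = 0`). -/
def Rexp {n : ℕ} {U : Type*} (μ : ℝ) (L : U → Mat n) (u : U) (ωh : Mat n) : Mat n :=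
  (trR (expM (μ • L u) * ωh) / trR ωh) • ωh

/-- `p_R(y|u,ωh) = tr(Γ(u,y)(R(u)ωh)) / tr(R(u)ωh)` (0 if the denominator is 0). -/
def pR {n : ℕ} {U Y : Type*} (Γ : U → Y → Mat n →ₗ[ℂ] Mat n)
    (R : U → Mat n → Mat n) (u : U) (y : Y) (ωh : Mat n) : ℝ :=
  trR (Γ u y (R u ωh)) / trR (R u ωh)

/-- The unnormalized conditional state `Λ_{Γ,R}(u,y)ωh` (0 when `p_R(y|u,ωh) = 0`). -/
def lamR {n : ℕ} {U Y : Type*} (Γ : U → Y → Mat n →ₗ[ℂ] Mat n)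
    (R : U → Mat n → Mat n) (u : U) (y : Y) (ωh : Mat n) : Mat n :=
  (pR Γ R u y ωh)⁻¹ • Γ u y (R u ωh)

/-! On a state `ω` (trace one) the cost `R(u)` is multiplication by `tr(exp(μ L(u)) ω)`, and both
`R(u)` and `Λ_{Γ,R}(u,y)` are homogeneous under real scalings (the degenerate scalings give `0`
on both sides, by the convention `0⁻¹ = 0`). Hence if `ω̂_k = c_k ω_k`, one step gives
`ω̂_{k+1} = c_k Λ_{Γ,R}(u_k,y_{k+1}) ω_k = c_k tr(exp(μ L(u_k)) ω_k) ω_{k+1}`, where the last step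
only needs `tr ω_k = 1`, which the normalized filter preserves because `p(y|u,ω) ≠ 0`. -/

section

variable {n : ℕ} {U Y : Type*}

lemma trR_smul (r : ℝ) (A : Mat n) : trR (r • A) = r * trR A := by
  simp [trR, trace_smul]

lemma Rexp_smul (μ : ℝ) (L : U → Mat n) (u : U) (c : ℝ) (ωh : Mat n) :
    Rexp μ L u (c • ωh) = c • Rexp μ L u ωh := by
  rcases eq_or_ne c 0 with rfl | hc
  · simp [Rexp]
  · simp only [Rexp, Matrix.mul_smul, trR_smul, mul_div_mul_left _ _ hc, smul_comm c]

lemma lamR_smul (Γ : U → Y → Mat n →ₗ[ℂ] Mat n) {R : U → Mat n → Mat n}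
    (hR : ∀ u (c : ℝ) ωh, R u (c • ωh) = c • R u ωh) (u : U) (y : Y) (c : ℝ) (ωh : Mat n) :
    lamR Γ R u y (c • ωh) = c • lamR Γ R u y ωh := by
  rcases eq_or_ne c 0 with rfl | hc
  · have hR0 : R u 0 = 0 := by simpa using hR u 0 0
    simp [lamR, hR0]
  · simp only [lamR, pR, hR, LinearMap.map_smul_of_tower, trR_smul, mul_div_mul_left _ _ hc,
      smul_comm c]

lemma lamR_Rexp_eq_smul_lamState (Γ : U → Y → Mat n →ₗ[ℂ] Mat n)
    (μ : ℝ) (L : U → Mat n) (u : U) (y : Y) {ω : Mat n} (hω : trR ω ≠ 0) :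
    lamR Γ (Rexp μ L) u y ω = trR (expM (μ • L u) * ω) • lamState Γ u y ω := by
  set t := trR (expM (μ • L u) * ω)
  have hRω : Rexp μ L u ω = (t / trR ω) • ω := rfl
  rcases eq_or_ne t 0 with ht | ht
  · simp [lamR, hRω, ht]
  · simp only [lamR, pR, lamState, pDist, hRω, LinearMap.map_smul_of_tower, trR_smul, smul_smul]
    congr 1
    field_simp

lemma lamState_posSemidef_and_trace_eq_one {Γ : U → Y → Mat n →ₗ[ℂ] Mat n}
    (hPSD : ∀ (u : U) (y : Y) (ω : Mat n), ω.PosSemidef → (Γ u y ω).PosSemidef)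
    (hp : ∀ (u : U) (y : Y) (ω : Mat n), ω.PosSemidef → ω.trace = 1 → pDist Γ u y ω ≠ 0)
    (u : U) (y : Y) {ω : Mat n} (hω : ω.PosSemidef) (htr : ω.trace = 1) :
    (lamState Γ u y ω).PosSemidef ∧ (lamState Γ u y ω).trace = 1 := by
  have hΓω := hPSD u y ω hω
  have htrace : (Γ u y ω).trace = pDist Γ u y ω :=
    Complex.eq_re_of_ofReal_le (r := 0) (by exact_mod_cast hΓω.trace_nonneg)
  have hp_nonneg : 0 ≤ pDist Γ u y ω := Complex.zero_le_real.mp (htrace ▸ hΓω.trace_nonneg)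
  have hp_pos : 0 < pDist Γ u y ω := hp_nonneg.lt_of_ne' (hp u y ω hω htr)
  refine ⟨hΓω.smul (inv_nonneg.mpr hp_pos.le), ?_⟩
  rw [lamState, trace_smul, htrace, Complex.real_smul, ← Complex.ofReal_mul,
    inv_mul_cancel₀ hp_pos.ne', Complex.ofReal_one]

end

theorem unnormalized_state_eq_scaled_state_general
    {n : ℕ} {U Y : Type*}
    (Γ : U → Y → Mat n →ₗ[ℂ] Mat n)
    (hPSD : ∀ (u : U) (y : Y) (ω : Mat n), ω.PosSemidef → (Γ u y ω).PosSemidef)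
    (hp : ∀ (u : U) (y : Y) (ω : Mat n), ω.PosSemidef → ω.trace = 1 →
      pDist Γ u y ω ≠ 0)
    (L : U → Mat n)
    (μ : ℝ)
    (u : ℕ → U) (ys : ℕ → Y)
    (ω : ℕ → Mat n) (ωh : ℕ → Mat n)
    (hω0 : (ω 0).PosSemidef) (hω0tr : (ω 0).trace = 1)
    (hω : ∀ k : ℕ, ω (k + 1) = lamState Γ (u k) (ys (k + 1)) (ω k))
    (hωh0 : ωh 0 = ω 0)
    (hωh : ∀ k : ℕ, ωh (k + 1) = lamR Γ (Rexp μ L) (u k) (ys (k + 1)) (ωh k)) :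
    ∀ k : ℕ,
      ωh k = (∏ i ∈ Finset.range k, trR (expM (μ • L (u i)) * ω i)) • ω k := by
  have hstate : ∀ k, (ω k).PosSemidef ∧ (ω k).trace = 1 := by
    intro k
    induction k with
    | zero => exact ⟨hω0, hω0tr⟩
    | succ k ih => rw [hω k]; exact lamState_posSemidef_and_trace_eq_one hPSD hp _ _ ih.1 ih.2
  intro k
  induction k with
  | zero => simpa using hωh0
  | succ k ih =>
    have htrR : trR (ω k) ≠ 0 := by simp [trR, (hstate k).2]
    rw [hωh k, ih, lamR_smul Γ (Rexp_smul μ L), lamR_Rexp_eq_smul_lamState Γ μ L _ _ htrR,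
      ← hω k, smul_smul, Finset.prod_range_succ]

/-- the unnormalized risk-sensitive conditional state is the normalized
conditional state scaled by `∏_{i<k} tr(exp(μ L(u_i)) ω_i)`. -/
theorem unnormalized_state_eq_scaled_state
    {n : ℕ} {U Y : Type*} [Fintype U] [Nonempty U] [Fintype Y] [Nonempty Y]
    (Γ : U → Y → Mat n →ₗ[ℂ] Mat n)
    (hPSD : ∀ (u : U) (y : Y) (ω : Mat n), ω.PosSemidef → (Γ u y ω).PosSemidef)
    (hNorm : ∀ (u : U) (ω : Mat n), ∑ y : Y, (Γ u y ω).trace = ω.trace)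
    (hp : ∀ (u : U) (y : Y) (ω : Mat n), ω.PosSemidef → ω.trace = 1 →
      pDist Γ u y ω ≠ 0)
    (L : U → Mat n) (hL : ∀ u, (L u).PosSemidef)
    (μ : ℝ) (hμ : 0 < μ)
    (u : ℕ → U) (ys : ℕ → Y)
    (ω : ℕ → Mat n) (ωh : ℕ → Mat n)
    (hω0 : (ω 0).PosSemidef) (hω0tr : (ω 0).trace = 1)
    (hω : ∀ k : ℕ, ω (k + 1) = lamState Γ (u k) (ys (k + 1)) (ω k))
    (hωh0 : ωh 0 = ω 0)
    (hωh : ∀ k : ℕ, ωh (k + 1) = lamR Γ (Rexp μ L) (u k) (ys (k + 1)) (ωh k)) :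
    ∀ k : ℕ,
      ωh k = (∏ i ∈ Finset.range k, trR (expM (μ • L (u i)) * ω i)) • ω k :=
  unnormalized_state_eq_scaled_state_general Γ hPSD hp L μ u ys ω ωh hω0 hω0tr hω hωh0 hωh
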